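/- Let N ≥ 4 be even and α ∈ (0, π/2). Define p_{N,α} = (w_{N-2}/w_{N-1}) ∫₀^α sin^{N-2} θ dθ with w_n = 2π^{(n+1)/2}/Γ((n+1)/2). Then p_{N,α} ≥ ((N-2)!!/(π·N·(N-3)!!))·cos α·sin^{N} α. -/

import Mathlib

/-!
For `N = 2k + 2` the half-integer values `Γ(k + 1/2) = (2k-1)‼ √π / 2^k` give
`w_{2k} / w_{2k+1} = (2k)‼ / (π (2k-1)‼)`. On `[0, α] ⊆ [0, π]` we have `sin^{2k} ≥ sin^{2k+1}`, and
`∫₀^α sin^n ≥ cos α sin^{n+1} α / (n+1)` because the derivative of `cos θ sin^{n+1} θ` is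
`(n+1) sin^n θ - (n+2) sin^{n+2} θ ≤ (n+1) sin^n θ`.
-/

open Real Finset

/-- Surface area of the unit sphere `S^n ⊂ ℝ^{n+1}`. -/
noncomputable def sphereArea (n : ℕ) : ℝ :=
  2 * Real.pi ^ (((n : ℝ) + 1) / 2) / Real.Gamma (((n : ℝ) + 1) / 2)

/-- Relative surface area of the spherical cap of colatitude `α` on `S^{N-1} ⊂ ℝ^N`. -/
noncomputable def capProb (N : ℕ) (α : ℝ) : ℝ :=
  sphereArea (N - 2) / sphereArea (N - 1) * ∫ θ in (0:ℝ)..α, Real.sin θ ^ (N - 2)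

-- At `k = 0` the truncated `2 * k - 1` is `0` and `0‼ = 1` plays the role of `(-1)‼`.
theorem sphereArea_two_mul (k : ℕ) :
    sphereArea (2 * k) = 2 ^ (k + 1) * π ^ k / (2 * k - 1).doubleFactorial := by
  have harg : ((2 * k : ℕ) + 1 : ℝ) / 2 = k + 1 / 2 := by push_cast; ring
  have hpow : π ^ ((k : ℝ) + 1 / 2) = π ^ k * √π := by
    rw [rpow_add pi_pos, rpow_natCast, sqrt_eq_rpow]
  have hfac : (0 : ℝ) < (2 * k - 1).doubleFactorial := mod_cast Nat.doubleFactorial_pos _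
  rw [sphereArea, harg, hpow, Gamma_nat_add_half, pow_succ]
  field_simp

theorem sphereArea_two_mul_add_one (k : ℕ) :
    sphereArea (2 * k + 1) = 2 * π ^ (k + 1) / k.factorial := by
  have harg : ((2 * k + 1 : ℕ) + 1 : ℝ) / 2 = (k : ℝ) + 1 := by push_cast; ring
  rw [sphereArea, harg, Gamma_nat_eq_factorial, ← Nat.cast_succ, rpow_natCast]

theorem sphereArea_two_mul_div_sphereArea_two_mul_add_one (k : ℕ) :
    sphereArea (2 * k) / sphereArea (2 * k + 1) =
      (2 * k).doubleFactorial / (π * (2 * k - 1).doubleFactorial) := by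
  have hfac : (0 : ℝ) < (2 * k - 1).doubleFactorial := mod_cast Nat.doubleFactorial_pos _
  rw [sphereArea_two_mul, sphereArea_two_mul_add_one, Nat.doubleFactorial_two_mul]
  push_cast
  field_simp
  ring

theorem integral_sin_pow_succ_le_integral_sin_pow (n : ℕ) {α : ℝ} (h0 : 0 ≤ α) (hα : α ≤ π) :
    ∫ θ in (0 : ℝ)..α, sin θ ^ (n + 1) ≤ ∫ θ in (0 : ℝ)..α, sin θ ^ n := by
  refine intervalIntegral.integral_mono_on h0
    ((by fun_prop : Continuous _).intervalIntegrable 0 α)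
    ((by fun_prop : Continuous _).intervalIntegrable _ _) fun θ hθ ↦ ?_
  exact pow_le_pow_of_le_one (sin_nonneg_of_nonneg_of_le_pi hθ.1 (hθ.2.trans hα))
    (sin_le_one θ) n.le_succ

theorem cos_mul_sin_pow_div_le_integral_sin_pow (n : ℕ) {α : ℝ} (h0 : 0 ≤ α) (hα : α ≤ π) :
    cos α * sin α ^ (n + 1) / (n + 1) ≤ ∫ θ in (0 : ℝ)..α, sin θ ^ n := by
  have hderiv : ∀ θ, HasDerivAt (fun θ ↦ cos θ * sin θ ^ (n + 1))
      ((n + 1) * sin θ ^ n - (n + 2) * sin θ ^ (n + 2)) θ := fun θ ↦ by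
    refine ((hasDerivAt_cos θ).fun_mul ((hasDerivAt_sin θ).fun_pow (n + 1))).congr_deriv ?_
    have hpyth := sin_sq_add_cos_sq θ
    push_cast
    linear_combination (↑n + 1) * sin θ ^ n * hpyth
  have hftc := intervalIntegral.integral_eq_sub_of_hasDerivAt (fun θ _ ↦ hderiv θ)
    ((by fun_prop : Continuous _).intervalIntegrable 0 α)
  have hle : ∫ θ in (0 : ℝ)..α, ((n + 1) * sin θ ^ n - (n + 2) * sin θ ^ (n + 2))
      ≤ ∫ θ in (0 : ℝ)..α, (n + 1) * sin θ ^ n := by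
    refine intervalIntegral.integral_mono_on h0
      ((by fun_prop : Continuous _).intervalIntegrable 0 α)
      ((by fun_prop : Continuous _).intervalIntegrable _ _) fun θ hθ ↦ ?_
    have hsin := sin_nonneg_of_nonneg_of_le_pi hθ.1 (hθ.2.trans hα)
    have hrem : 0 ≤ (n + 2 : ℝ) * sin θ ^ (n + 2) := by positivity
    linarith
  rw [hftc, intervalIntegral.integral_const_mul] at hle
  rw [div_le_iff₀ (by positivity)]
  simpa [mul_comm] using hle

theorem capProb_lower_bound_even (N : ℕ) (hN : 4 ≤ N) (hEven : Even N)
    (α : ℝ) (hα : α ∈ Set.Ioo 0 (Real.pi / 2)) :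
    capProb N α ≥
      ((Nat.doubleFactorial (N - 2) : ℝ) /
          (Real.pi * N * (Nat.doubleFactorial (N - 3) : ℝ))) *
        Real.cos α * Real.sin α ^ N := by
  obtain ⟨k, rfl⟩ : ∃ k, N = 2 * k + 2 := ⟨N / 2 - 1, by obtain ⟨m, rfl⟩ := hEven; omega⟩
  obtain ⟨hα0, hαhalf⟩ := hα
  have hαπ : α ≤ π := by linarith [pi_pos]
  have hfac : (0 : ℝ) < (2 * k - 1).doubleFactorial := mod_cast Nat.doubleFactorial_pos _
  rw [capProb, show 2 * k + 2 - 2 = 2 * k by omega, show 2 * k + 2 - 1 = 2 * k + 1 by omega,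
    show 2 * k + 2 - 3 = 2 * k - 1 by omega, sphereArea_two_mul_div_sphereArea_two_mul_add_one]
  calc (2 * k).doubleFactorial / (π * (2 * k + 2 : ℕ) * (2 * k - 1).doubleFactorial) * cos α
        * sin α ^ (2 * k + 2)
      = (2 * k).doubleFactorial / (π * (2 * k - 1).doubleFactorial)
          * (cos α * sin α ^ (2 * k + 1 + 1) / (2 * k + 1 + 1 : ℕ)) := by
        field_simp
    _ ≤ (2 * k).doubleFactorial / (π * (2 * k - 1).doubleFactorial)
          * ∫ θ in (0 : ℝ)..α, sin θ ^ (2 * k) := by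
        gcongr
        exact_mod_cast (cos_mul_sin_pow_div_le_integral_sin_pow _ hα0.le hαπ).trans
          (integral_sin_pow_succ_le_integral_sin_pow _ hα0.le hαπ)
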